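/- Let k and a be integers with 2 ≤ a ≤ k−2, and let B(k,a) be the broom on k vertices, i.e., the spider S_{a−1,1,…,1} with one leg of a−1 edges and k−a legs of one edge each. Then for every n ≥ k, ex_c(n, B(k,a)) ≥ max{ ⌊(k−a)n/2⌋, ⌊(a−1)/2⌋ · (n − ⌊(a−1)/2⌋) }. -/

import Mathlib

/-!
A connected graph whose degrees are at most `k - a` cannot contain `B(k,a)`, whose centre has
degree `k - a + 1`. For `d = k - a = 2m` the `m`-th power of the cycle `C_n` is such a graph with
`dn/2` edges; for `d = 2m + 1` adding the `⌊n/2⌋` disjoint chords `{i, i + ⌊n/2⌋}` gives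
`⌊dn/2⌋` edges.

The complete bipartite graph `K_{b, n-b}` with `b = ⌊(a-1)/2⌋` has a vertex cover of size `b`,
whereas the broom contains `b + 1` disjoint edges (`{0, a}` and `{2i+1, 2i+2}` along the long
leg), so the broom has vertex cover number above `b`, and vertex cover number is monotone under
containment.
-/

open SimpleGraph

/-- `G` contains a copy of `F`, i.e. a subgraph isomorphic to `F`
(given by an injective graph homomorphism). -/
def ContainsCopy {α β : Type*} (F : SimpleGraph α) (G : SimpleGraph β) : Prop :=
  ∃ f : α ↪ β, ∀ ⦃a b : α⦄, F.Adj a b → G.Adj (f a) (f b)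

/-- The connected Turán number `ex_c(n, F)`: the maximum number of edges of a
connected `F`-free simple graph on `n` vertices. -/
noncomputable def exConn {α : Type*} (n : ℕ) (F : SimpleGraph α) : ℕ :=
  sSup {m | ∃ G : SimpleGraph (Fin n), G.Connected ∧ ¬ ContainsCopy F G ∧ m = G.edgeSet.ncard}

/-- The broom `B(k,a)`: the spider `S_{a-1,1,…,1}` on `k` vertices, with center `0`,
one leg `0 - 1 - ⋯ - (a-1)` of `a-1` edges, and `k-a` legs of one edge each
(the pendant vertices `a, …, k-1` adjacent to the center `0`). -/
def broom (k a : ℕ) : SimpleGraph (Fin k) :=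
  SimpleGraph.fromRel (fun i j =>
    ((i : ℕ) + 1 = (j : ℕ) ∧ (j : ℕ) < a) ∨ ((i : ℕ) = 0 ∧ a ≤ (j : ℕ)))

open Function Finset
open scoped Pointwise

theorem containsCopy_iff_isContained {α β : Type*} {F : SimpleGraph α} {G : SimpleGraph β} :
    ContainsCopy F G ↔ F ⊑ G :=
  ⟨fun ⟨f, hf⟩ => ⟨⟨⟨f, fun h => hf h⟩, f.injective⟩⟩,
    fun ⟨c⟩ => ⟨⟨c, c.injective⟩, fun _ _ h => c.toHom.map_adj h⟩⟩

theorem ncard_edgeSet_le_exConn {α V : Type*} [Fintype V] {n : ℕ} {F : SimpleGraph α}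
    {G : SimpleGraph V} (hV : Fintype.card V = n) (hG : G.Connected) (hF : F.Free G) :
    G.edgeSet.ncard ≤ exConn n F := by
  classical
  have e := G.overFinIso hV
  refine le_csSup ?_ ⟨G.overFin hV, e.connected_iff.mp hG, ?_, ?_⟩
  · exact ((Set.finite_range fun H : SimpleGraph (Fin n) => H.edgeSet.ncard).subset
      (by rintro _ ⟨H, -, -, rfl⟩; exact ⟨H, rfl⟩)).bddAbove
  · rwa [containsCopy_iff_isContained, ← isContained_congr Iso.refl e]
  · rw [Set.ncard_eq_toFinset_card', Set.ncard_eq_toFinset_card']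
    exact e.card_edgeFinset_eq

theorem free_of_forall_degree_lt {α β : Type*} {F : SimpleGraph α} {G : SimpleGraph β} (x : α)
    [Fintype (F.neighborSet x)] [∀ v, Fintype (G.neighborSet v)]
    (h : ∀ v, G.degree v < F.degree x) : F.Free G :=
  fun ⟨f⟩ => (h (f x)).not_ge (f.degree_le x)

theorem SimpleGraph.IsRegularOfDegree.two_mul_ncard_edgeSet {V : Type*} [Fintype V]
    {G : SimpleGraph V} [DecidableRel G.Adj] {d : ℕ} (h : G.IsRegularOfDegree d) :
    2 * G.edgeSet.ncard = Fintype.card V * d := by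
  rw [Set.ncard_eq_toFinset_card', ← edgeFinset, ← sum_degrees_eq_twice_card_edges]
  simp [h.degree_eq]

theorem degree_sup_of_disjoint {V : Type*} {G H : SimpleGraph V} (h : Disjoint G H) (v : V)
    [Fintype ((G ⊔ H).neighborSet v)] [Fintype (G.neighborSet v)] [Fintype (H.neighborSet v)] :
    (G ⊔ H).degree v = G.degree v + H.degree v := by
  rw [← card_neighborFinset_eq_degree, neighborFinset_sup_of_disjoint v h, card_disjUnion,
    card_neighborFinset_eq_degree, card_neighborFinset_eq_degree]

theorem ncard_edgeSet_sup_of_disjoint {V : Type*} [Finite V] {G H : SimpleGraph V}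
    (h : Disjoint G H) : (G ⊔ H).edgeSet.ncard = G.edgeSet.ncard + H.edgeSet.ncard := by
  rw [edgeSet_sup, Set.ncard_union_eq (disjoint_edgeSet.mpr h)]

theorem le_vertexCoverNum_of_injective {V ι : Type*} {G : SimpleGraph V} {u v : ι → V}
    (huv : Injective (Sum.elim u v)) (hadj : ∀ i, G.Adj (u i) (v i)) :
    ENat.card ι ≤ G.vertexCoverNum := by
  classical
  refine le_iInf₂ fun c hc => ?_
  let side : ι → ι ⊕ ι := fun i => if u i ∈ c then .inl i else .inr i
  have hside : ∀ i, Sum.elim u v (side i) ∈ c := fun i => by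
    by_cases hu : u i ∈ c
    · simp [side, hu]
    · simpa [side, hu] using (hc (hadj i)).resolve_left hu
  have side_inj : Injective side := fun i j h => by
    simp only [side] at h
    split_ifs at h <;> simpa using h
  simpa using ENat.card_le_card_of_injective ((huv.comp side_inj).codRestrict hside)

theorem completeBipartiteGraph_connected {V W : Type*} [Nonempty V] [Nonempty W] :
    (completeBipartiteGraph V W).Connected := by
  obtain ⟨v⟩ := ‹Nonempty V›
  obtain ⟨w⟩ := ‹Nonempty W›
  refine (connected_iff_exists_forall_reachable _).mpr ⟨.inl v, ?_⟩
  have hvw : (completeBipartiteGraph V W).Reachable (.inl v) (.inr w) := Adj.reachable (by simp)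
  rintro (_ | _)
  · exact hvw.trans (Adj.reachable (by simp))
  · exact Adj.reachable (by simp)

theorem vertexCoverNum_completeBipartiteGraph_le {V W : Type*} :
    (completeBipartiteGraph V W).vertexCoverNum ≤ ENat.card V := by
  have hc : (completeBipartiteGraph V W).IsVertexCover (Set.range Sum.inl) := by
    rintro (_ | _) (_ | _) h <;> simp_all
  calc _ ≤ (Set.range Sum.inl).encard := hc.vertexCoverNum_le
    _ ≤ ENat.card V := by
      rw [← Set.image_univ, ← Set.encard_univ]; exact Set.encard_image_le _ _

theorem ncard_edgeSet_completeBipartiteGraph {V W : Type*} [Finite V] [Finite W] :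
    (completeBipartiteGraph V W).edgeSet.ncard = Nat.card V * Nat.card W := by
  rw [Set.ncard_def, encard_edgeSet_completeBipartiteGraph]
  simp [ENat.card_eq_coe_natCard]

theorem degree_circulantGraph {G : Type*} [AddGroup G] [DecidableEq G]
    {s : Finset G} (h0 : (0 : G) ∉ s) (v : G)
    [Fintype ((circulantGraph (s : Set G)).neighborSet v)] :
    (circulantGraph (s : Set G)).degree v = #(s ∪ -s) := by
  rw [← card_neighborFinset_eq_degree, ← (s ∪ -s).card_map (addRightEmbedding v)]
  congr 1
  ext w
  rw [mem_neighborFinset]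
  simp only [circulantGraph_adj, mem_coe, mem_map, mem_union, mem_neg', addRightEmbedding_apply]
  constructor
  · rintro ⟨-, h | h⟩
    · exact ⟨w - v, .inr (by simpa using h), sub_add_cancel w v⟩
    · exact ⟨w - v, .inl h, sub_add_cancel w v⟩
  · rintro ⟨x, hx, rfl⟩
    have hx0 : x ≠ 0 := by rintro rfl; simp [h0] at hx
    refine ⟨by simpa using hx0, ?_⟩
    simpa [or_comm] using hx

section fromPairs
variable {V ι : Type*} {u v : ι → V}

def fromPairs (u v : ι → V) : SimpleGraph V :=
  fromEdgeSet (Set.range fun i => s(u i, v i))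

theorem fromPairs_adj {x y : V} :
    (fromPairs u v).Adj x y ↔
      x ≠ y ∧ ∃ i, (x = u i ∧ y = v i) ∨ (x = v i ∧ y = u i) := by
  simp only [fromPairs, fromEdgeSet_adj, Set.mem_range, Sym2.eq_iff, and_comm (a := _ ≠ _)]
  exact and_congr_left fun _ => exists_congr fun _ => by grind

theorem ncard_edgeSet_fromPairs (huv : Injective (Sum.elim u v)) :
    (fromPairs u v).edgeSet.ncard = Nat.card ι := by
  have hdiag : Disjoint (Set.range fun i => s(u i, v i)) Sym2.diagSet := by
    rw [Set.disjoint_left]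
    rintro _ ⟨i, rfl⟩ h
    exact Sum.inl_ne_inr (huv (Sym2.mk_isDiag_iff.mp h))
  rw [fromPairs, edgeSet_fromEdgeSet, hdiag.sdiff_eq_left, Set.ncard_range_of_injective]
  intro i j h
  rcases Sym2.eq_iff.mp h with ⟨h, -⟩ | ⟨h, -⟩
  · exact Sum.inl_injective (huv h)
  · exact absurd (@huv (.inl i) (.inr j) h) Sum.inl_ne_inr

theorem degree_fromPairs_le_one (huv : Injective (Sum.elim u v)) (x : V)
    [Fintype ((fromPairs u v).neighborSet x)] : (fromPairs u v).degree x ≤ 1 := by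
  rw [← card_neighborFinset_eq_degree, card_le_one]
  simp only [mem_neighborFinset, fromPairs_adj]
  rintro y ⟨-, i, ⟨rfl, rfl⟩ | ⟨rfl, rfl⟩⟩ z ⟨-, j, ⟨hx, rfl⟩ | ⟨hx, rfl⟩⟩
  · obtain rfl := Sum.inl_injective (@huv (.inl i) (.inl j) hx); rfl
  · exact absurd (@huv (.inl i) (.inr j) hx) Sum.inl_ne_inr
  · exact absurd (@huv (.inr i) (.inl j) hx) Sum.inr_ne_inl
  · obtain rfl := Sum.inr_injective (@huv (.inr i) (.inr j) hx); rfl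

theorem disjoint_fromPairs {G : SimpleGraph V} (h : ∀ i, ¬G.Adj (u i) (v i)) :
    Disjoint G (fromPairs u v) := by
  rw [← disjoint_edgeSet, fromPairs, edgeSet_fromEdgeSet, Set.disjoint_left]
  rintro _ he ⟨⟨i, rfl⟩, -⟩
  exact h i he

end fromPairs

theorem ZMod.natCast_ne_zero_of_lt {n r : ℕ} (hr : 0 < r) (hrn : r < n) : (r : ZMod n) ≠ 0 := by
  rw [Ne, ZMod.natCast_eq_zero_iff]
  exact fun h => (Nat.le_of_dvd hr h).not_gt hrn

theorem ZMod.natCast_injOn_Iio {n : ℕ} : Set.InjOn (Nat.cast : ℕ → ZMod n) (Set.Iio n) :=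
  fun a ha b hb h => by
    rwa [ZMod.natCast_eq_natCast_iff', Nat.mod_eq_of_lt ha, Nat.mod_eq_of_lt hb] at h

def cycleJumps (n m : ℕ) : Finset (ZMod n) := (Icc 1 m).image (↑)

section cycleJumps
variable {n m : ℕ}

theorem zero_notMem_cycleJumps (hmn : m < n) : (0 : ZMod n) ∉ cycleJumps n m := by
  simp only [cycleJumps, mem_image, mem_Icc, not_exists, not_and]
  exact fun t ht => ZMod.natCast_ne_zero_of_lt (by omega) (by omega)

theorem natCast_notMem_cycleJumps_union_neg {r : ℕ} (hmr : m < r) (hrn : r + m < n) :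
    (r : ZMod n) ∉ cycleJumps n m ∪ -cycleJumps n m := by
  simp only [cycleJumps, mem_union, mem_neg', mem_image, mem_Icc, not_or, not_exists, not_and]
  refine ⟨fun t ht h => ?_, fun t ht h => ?_⟩
  · have := ZMod.natCast_injOn_Iio (by simp; omega) (by simp; omega) h
    omega
  · refine ZMod.natCast_ne_zero_of_lt (n := n) (r := t + r) (by omega) (by omega) ?_
    rw [Nat.cast_add, h, neg_add_cancel]

theorem card_cycleJumps_union_neg (hmn : 2 * m < n) :
    #(cycleJumps n m ∪ -cycleJumps n m) = 2 * m := by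
  have hcard : #(cycleJumps n m) = m := by
    rw [cycleJumps, card_image_of_injOn, Nat.card_Icc, Nat.add_sub_cancel]
    exact ZMod.natCast_injOn_Iio.mono fun t ht => by simp at ht ⊢; omega
  have hdisj : Disjoint (cycleJumps n m) (-cycleJumps n m) := by
    simp only [Finset.disjoint_left, cycleJumps, mem_neg', mem_image, mem_Icc]
    rintro _ ⟨t, ht, rfl⟩ ⟨t', ht', h⟩
    refine ZMod.natCast_ne_zero_of_lt (n := n) (r := t' + t) (by omega) (by omega) ?_
    rw [Nat.cast_add, h, neg_add_cancel]
  rw [card_union_of_disjoint hdisj, card_neg, hcard, two_mul]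

end cycleJumps

-- `circulantGraph` symmetrises its jumps: `x` and `y` are adjacent iff their cyclic distance
-- lies in `[1, m]`.
abbrev cyclePower (n m : ℕ) : SimpleGraph (ZMod n) :=
  circulantGraph (cycleJumps n m : Set (ZMod n))

section cyclePower
variable {n m : ℕ} [NeZero n]

theorem cyclePower_isRegularOfDegree (hmn : 2 * m < n) :
    (cyclePower n m).IsRegularOfDegree (2 * m) := fun v => by
  rw [degree_circulantGraph (zero_notMem_cycleJumps (by omega)), card_cycleJumps_union_neg hmn]

theorem cyclePower_connected (hm : 1 ≤ m) : (cyclePower n m).Connected := by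
  have hstep : ∀ x : ZMod n, (cyclePower n m).Reachable x (x + 1) := fun x => by
    by_cases hx : x = x + 1
    · rw [← hx]
    · refine Adj.reachable ⟨hx, .inr ?_⟩
      simpa [cycleJumps] using ⟨1, ⟨le_rfl, hm⟩, Nat.cast_one⟩
  have hreach : ∀ t : ℕ, (cyclePower n m).Reachable 0 t := fun t => by
    induction t with
    | zero => simp
    | succ t ih => simpa using ih.trans (hstep t)
  refine (connected_iff_exists_forall_reachable _).mpr ⟨0, fun x => ?_⟩
  simpa using hreach x.val

theorem ncard_edgeSet_cyclePower (hmn : 2 * m < n) :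
    (cyclePower n m).edgeSet.ncard = m * n := by
  have := (cyclePower_isRegularOfDegree hmn).two_mul_ncard_edgeSet
  rw [ZMod.card] at this
  linarith

end cyclePower

abbrev halfTurnMatching (n : ℕ) : SimpleGraph (ZMod n) :=
  fromPairs (fun i : Fin (n / 2) => ((i : ℕ) : ZMod n)) fun i => ((i + n / 2 : ℕ) : ZMod n)

section halfTurnMatching
variable {n : ℕ}

theorem injective_halfTurnPairs :
    Injective (Sum.elim (fun i : Fin (n / 2) => ((i : ℕ) : ZMod n))
      fun i : Fin (n / 2) => ((i + n / 2 : ℕ) : ZMod n)) := by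
  rintro (i | i) (j | j) h <;> have := i.2 <;> have := j.2 <;>
    have := ZMod.natCast_injOn_Iio (by simp; omega) (by simp; omega) h <;>
    simp [Fin.ext_iff] <;> omega

theorem ncard_edgeSet_halfTurnMatching : (halfTurnMatching n).edgeSet.ncard = n / 2 := by
  rw [halfTurnMatching, ncard_edgeSet_fromPairs injective_halfTurnPairs, Nat.card_eq_fintype_card,
    Fintype.card_fin]

theorem degree_halfTurnMatching_le_one (v : ZMod n)
    [Fintype ((halfTurnMatching n).neighborSet v)] : (halfTurnMatching n).degree v ≤ 1 :=
  degree_fromPairs_le_one injective_halfTurnPairs v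

theorem disjoint_cyclePower_halfTurnMatching {m : ℕ} (hmn : 2 * m + 2 ≤ n) :
    Disjoint (cyclePower n m) (halfTurnMatching n) := by
  refine disjoint_fromPairs fun i => ?_
  rintro ⟨-, h⟩
  have hsub : ((i + n / 2 : ℕ) : ZMod n) - (i : ℕ) = (n / 2 : ℕ) := by push_cast; ring
  have hnot := natCast_notMem_cycleJumps_union_neg (n := n) (r := n / 2) (m := m)
    (by omega) (by omega)
  rw [mem_union, mem_neg', ← hsub, neg_sub] at hnot
  simp only [mem_coe] at h
  tauto

end halfTurnMatching

theorem exists_connected_forall_degree_le {n d : ℕ} [NeZero n] (hd : 2 ≤ d) (hdn : d < n) :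
    ∃ (G : SimpleGraph (ZMod n)) (_ : DecidableRel G.Adj),
      G.Connected ∧ (∀ v, G.degree v ≤ d) ∧ G.edgeSet.ncard = d * n / 2 := by
  classical
  obtain ⟨m, rfl | rfl⟩ : ∃ m, d = 2 * m ∨ d = 2 * m + 1 := ⟨d / 2, by omega⟩
  · refine ⟨cyclePower n m, inferInstance, cyclePower_connected (by omega),
      fun v => ((cyclePower_isRegularOfDegree hdn).degree_eq v).le, ?_⟩
    rw [ncard_edgeSet_cyclePower hdn, mul_assoc, Nat.mul_div_cancel_left _ two_pos]
  · have hdisj := disjoint_cyclePower_halfTurnMatching (m := m) (n := n) (by omega)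
    refine ⟨cyclePower n m ⊔ halfTurnMatching n, inferInstance,
      (cyclePower_connected (by omega)).mono le_sup_left, fun v => ?_, ?_⟩
    · rw [degree_sup_of_disjoint hdisj, (cyclePower_isRegularOfDegree (by omega)).degree_eq]
      exact Nat.add_le_add_left (degree_halfTurnMatching_le_one v) _
    · rw [ncard_edgeSet_sup_of_disjoint hdisj, ncard_edgeSet_cyclePower (by omega),
        ncard_edgeSet_halfTurnMatching, add_mul, mul_assoc, one_mul]
      omega

theorem le_vertexCoverNum_broom {k a : ℕ} (ha : 1 ≤ a) (hak : a < k) :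
    ((a - 1) / 2 + 1 : ℕ) ≤ (broom k a).vertexCoverNum := by
  let u : Option (Fin ((a - 1) / 2)) → Fin k
    | none => ⟨0, by omega⟩
    | some i => ⟨2 * i + 1, by omega⟩
  let v : Option (Fin ((a - 1) / 2)) → Fin k
    | none => ⟨a, hak⟩
    | some i => ⟨2 * i + 2, by omega⟩
  have huv : Injective (Sum.elim u v) := by
    rintro ((_ | i) | (_ | i)) ((_ | j) | (_ | j)) h <;>
      simp only [Sum.elim_inl, Sum.elim_inr, Fin.ext_iff, Sum.inl.injEq, Sum.inr.injEq,
        Option.some.injEq, reduceCtorEq, u, v] at h ⊢ <;> omega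
  have hadj : ∀ i, (broom k a).Adj (u i) (v i) := by
    rintro (_ | i) <;> simp [u, v, broom, Fin.ext_iff] <;> omega
  simpa using le_vertexCoverNum_of_injective huv hadj

theorem broom_degree_center {k a : ℕ} (ha : 2 ≤ a) (hak : a ≤ k) {c : Fin k}
    (hc : (c : ℕ) = 0) [Fintype ((broom k a).neighborSet c)] :
    (broom k a).degree c = k - a + 1 := by
  have hN : (broom k a).neighborFinset c = (insert 1 (Ico a k)).attachFin
      fun j hj => by rw [mem_insert, mem_Ico] at hj; omega := by
    ext j
    rw [mem_neighborFinset]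
    simp [broom, Fin.ext_iff, hc]
    omega
  rw [← card_neighborFinset_eq_degree, hN, card_attachFin,
    card_insert_of_notMem (by rw [mem_Ico]; omega), Nat.card_Ico]

theorem mul_sub_le_exConn_broom {k a n : ℕ} (hak : a < k) (hkn : k ≤ n) :
    (a - 1) / 2 * (n - (a - 1) / 2) ≤ exConn n (broom k a) := by
  rcases Nat.eq_zero_or_pos ((a - 1) / 2) with hb | hb
  · simp [hb]
  have hcover := le_vertexCoverNum_broom (by omega) hak
  have hbn : (a - 1) / 2 < n := by omega
  generalize (a - 1) / 2 = b at hcover hb hbn ⊢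
  have : Nonempty (Fin b) := ⟨⟨0, hb⟩⟩
  have : Nonempty (Fin (n - b)) := ⟨⟨0, by omega⟩⟩
  have hfree : (broom k a).Free (completeBipartiteGraph (Fin b) (Fin (n - b))) := fun h => by
    have := hcover.trans
      (h.vertexCoverNum_le_vertexCoverNum.trans vertexCoverNum_completeBipartiteGraph_le)
    rw [ENat.card_eq_coe_natCard, Nat.card_eq_fintype_card, Fintype.card_fin,
      ENat.natCast_le_natCast] at this
    omega
  simpa [ncard_edgeSet_completeBipartiteGraph] using
    ncard_edgeSet_le_exConn (by simp; omega) completeBipartiteGraph_connected hfree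

theorem mul_div_two_le_exConn_broom {k a n : ℕ} (ha : 2 ≤ a) (hak : a + 2 ≤ k)
    (hkn : k ≤ n) :
    (k - a) * n / 2 ≤ exConn n (broom k a) := by
  classical
  have : NeZero n := ⟨by omega⟩
  obtain ⟨G, _, hG, hdeg, hcard⟩ :=
    exists_connected_forall_degree_le (d := k - a) (n := n) (by omega) (by omega)
  rw [← hcard]
  refine ncard_edgeSet_le_exConn (ZMod.card n) hG
    (free_of_forall_degree_lt ⟨0, by omega⟩ fun v => ?_)
  rw [broom_degree_center ha (by omega) rfl]
  exact Nat.lt_succ_of_le (hdeg v)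

/-- Theorem (broom lower bound): for `2 ≤ a ≤ k-2` and `n ≥ k`,
`ex_c(n, B(k,a)) ≥ max{⌊(k-a)n/2⌋, ⌊(a-1)/2⌋ (n - ⌊(a-1)/2⌋)}`. -/
theorem exConn_broom_lower (k a : ℕ) (ha : 2 ≤ a) (hak : a ≤ k - 2)
    (n : ℕ) (hn : k ≤ n) :
    max ((k - a) * n / 2) ((a - 1) / 2 * (n - (a - 1) / 2)) ≤ exConn n (broom k a) :=
  max_le (mul_div_two_le_exConn_broom ha (by omega) hn) (mul_sub_le_exConn_broom (by omega) hn)
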